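/- arXiv:2111.11307 — 2 statements merged into one kernel-verified Lean document; each statement's English description precedes it below -/
import Mathlib

section
/- In the PDSTSP truck-route setting, let H ⊆ V_c, let H' ⊆ H satisfy |H'| ≥ 3 with |H'| odd, and let E' be a set of two-element edges of the complete graph on V such that: (i) every edge in E' has exactly one endpoint in H', (ii) every vertex of H' is an endpoint of exactly one edge of E', (iii) no edge in E' has both endpoints in H, and (iv) no two distinct edges in E' share an endpoint. Then in(H) + |{e ∈ E' : e is an edge of P}| ≤ ∑_{j ∈ H} y_j + (|H'| − 1)/2. -/
/-!
Counting the path-edge endpoints that lie in `H` gives `2 in(H) + cut(H) = 2 |S* ∩ H|`, because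
the ends `d`, `d'` of the path lie outside `H`. Every edge of `E'` joins `H' ⊆ H` to a vertex
outside `H`, so the number `m` of edges of `E'` on the path is at most `cut(H)`; being disjoint
and each meeting `H'`, they also number at most `|H'|`. Hence
`2 (in(H) + m) ≤ 2 |S* ∩ H| + m ≤ 2 |S* ∩ H| + |H'|`, and as `|H'|` is odd we may halve with
rounding down.
-/

/-- Number of edges of the path (given as the list of its vertices) with both
endpoints in `S`. -/
def inCount {α : Type*} [DecidableEq α] (S : Finset α) (p : List α) : ℕ :=
  (p.zip p.tail).countP (fun e => decide (e.1 ∈ S ∧ e.2 ∈ S))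

/-- Number of edges of the path (given as the list of its vertices) with exactly
one endpoint in `S`. -/
def cutCount {α : Type*} [DecidableEq α] (S : Finset α) (p : List α) : ℕ :=
  (p.zip p.tail).countP (fun e => decide (Xor (e.1 ∈ S) (e.2 ∈ S)))

/-- The edges of the path (given as the list of its vertices), as unordered pairs. -/
def pathSym2Edges {α : Type*} (p : List α) : List (Sym2 α) :=
  (p.zip p.tail).map (fun q => s(q.1, q.2))

section PathCounts

variable {α : Type*} [DecidableEq α] (S : Finset α)

lemma inCount_cons_cons (x y : α) (t : List α) :
    inCount S (x :: y :: t) = (if x ∈ S ∧ y ∈ S then 1 else 0) + inCount S (y :: t) := by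
  simp only [inCount, List.tail_cons, List.zip_cons_cons, List.countP_cons, decide_eq_true_eq]
  omega

lemma cutCount_cons_cons (x y : α) (t : List α) :
    cutCount S (x :: y :: t)
      = (if Xor (x ∈ S) (y ∈ S) then 1 else 0) + cutCount S (y :: t) := by
  simp only [cutCount, List.tail_cons, List.zip_cons_cons, List.countP_cons, decide_eq_true_eq]
  omega

-- Handshake count: a vertex of `S` on the path lies on two path edges, an endpoint on only one.
lemma two_mul_inCount_add_cutCount (x : α) (p : List α) :
    2 * inCount S (x :: p) + cutCount S (x :: p)
        + (if x ∈ S then 1 else 0)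
        + (if (x :: p).getLast (List.cons_ne_nil x p) ∈ S then 1 else 0)
      = 2 * (x :: p).countP (· ∈ S) := by
  induction p generalizing x with
  | nil => by_cases hx : x ∈ S <;> simp [inCount, cutCount, hx]
  | cons y t ih =>
    rw [inCount_cons_cons, cutCount_cons_cons, List.getLast_cons_cons, List.countP_cons]
    have := ih y
    by_cases hx : x ∈ S <;> by_cases hy : y ∈ S <;> simp_all [Xor] <;> omega

lemma two_mul_inCount_add_cutCount_of_not_mem {d d' : α} (hd : d ∉ S) (hd' : d' ∉ S)
    (l : List α) :
    2 * inCount S (d :: (l ++ [d'])) + cutCount S (d :: (l ++ [d'])) = 2 * l.countP (· ∈ S) := by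
  have := two_mul_inCount_add_cutCount S d (l ++ [d'])
  simp_all [List.countP_append]

lemma card_filter_mem_pathSym2Edges_le_cutCount {E : Finset (Sym2 α)}
    (hE : ∀ e ∈ E, ∃ a b, e = s(a, b) ∧ a ∈ S ∧ b ∉ S) (p : List α) :
    (E.filter (· ∈ pathSym2Edges p)).card ≤ cutCount S p := by
  have hcrossing : ∀ q ∈ p.zip p.tail, s(q.1, q.2) ∈ E → Xor (q.1 ∈ S) (q.2 ∈ S) := by
    rintro ⟨u, v⟩ - huv
    obtain ⟨a, b, hab, ha, hb⟩ := hE _ huv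
    rcases Sym2.eq_iff.mp hab with ⟨rfl, rfl⟩ | ⟨rfl, rfl⟩ <;> simp [Xor, ha, hb]
  calc (E.filter (· ∈ pathSym2Edges p)).card
      ≤ ((pathSym2Edges p).filter (· ∈ E)).toFinset.card :=
        Finset.card_le_card fun e he => by simp_all
    _ ≤ ((pathSym2Edges p).filter (· ∈ E)).length := List.toFinset_card_le _
    _ ≤ cutCount S p := by
        rw [← List.countP_eq_length_filter, pathSym2Edges, List.countP_map, cutCount]
        exact List.countP_mono_left fun q hq hqE => by
          simpa using hcrossing q hq (by simpa using hqE)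

end PathCounts

lemma List.Nodup.countP_mem_eq_card_inter {α : Type*} [DecidableEq α] {l : List α} (hl : l.Nodup)
    (S : Finset α) : l.countP (· ∈ S) = (l.toFinset ∩ S).card := by
  rw [List.countP_eq_length_filter, ← List.toFinset_card_of_nodup (hl.filter _),
    List.toFinset_filter]
  congr 1
  ext
  simp

lemma Sym2.card_le_of_pairwise_disjoint {α : Type*} {E : Finset (Sym2 α)} {T : Finset α}
    (hmeet : ∀ e ∈ E, ∃ v ∈ T, v ∈ e)
    (hdisj : ∀ e₁ ∈ E, ∀ e₂ ∈ E, e₁ ≠ e₂ → ∀ v ∈ e₁, v ∉ e₂) :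
    E.card ≤ T.card :=
  Finset.card_le_card_of_forall_subsingleton (fun e v => v ∈ e) hmeet
    fun v _ e₁ ⟨he₁, hv₁⟩ e₂ ⟨he₂, hv₂⟩ =>
      by_contra fun hne => hdisj e₁ he₁ e₂ he₂ hne v hv₁ hv₂

theorem pdstsp_two_matching_general
    {α : Type*} [DecidableEq α]
    (Vc : Finset α) (d d' : α)
    (hdVc : d ∉ Vc) (hd'Vc : d' ∉ Vc)
    (Sstar : Finset α)
    -- the truck path `P` is `d :: l ++ [d']`, a simple path from `d` to `d'`
    (l : List α)
    (hnodup : (d :: (l ++ [d'])).Nodup)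
    (hinternal : l.toFinset = Sstar)
    (y : α → ℕ) (hy : ∀ i, y i = if i ∈ Sstar then 1 else 0)
    (H H' : Finset α) (hH : H ⊆ Vc) (hH' : H' ⊆ H)
    (hH'odd : Odd H'.card)
    (E' : Finset (Sym2 α))
    -- (i) every edge in `E'` has exactly one endpoint in `H'`
    (hi : ∀ e ∈ E', ∃ a b, e = s(a, b) ∧ a ∈ H' ∧ b ∉ H')
    -- (iii) no edge in `E'` has both endpoints in `H`
    (hiii : ∀ e ∈ E', ¬ (∀ v ∈ e, v ∈ H))
    -- (iv) no two distinct edges in `E'` share an endpoint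
    (hiv : ∀ e₁ ∈ E', ∀ e₂ ∈ E', e₁ ≠ e₂ → ∀ v ∈ e₁, v ∉ e₂) :
    inCount H (d :: (l ++ [d']))
        + (E'.filter (fun e => e ∈ pathSym2Edges (d :: (l ++ [d'])))).card
      ≤ (∑ j ∈ H, y j) + (H'.card - 1) / 2 := by
  have hdH : d ∉ H := fun h => hdVc (hH h)
  have hd'H : d' ∉ H := fun h => hd'Vc (hH h)
  have handshake := two_mul_inCount_add_cutCount_of_not_mem H hdH hd'H l
  have hl : l.Nodup := hnodup.sublist (by simp)
  have hcount : l.countP (· ∈ H) = ∑ j ∈ H, y j := by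
    rw [hl.countP_mem_eq_card_inter, hinternal, Finset.sum_congr rfl fun i _ => hy i,
      Finset.sum_ite_mem, Finset.inter_comm, Finset.card_eq_sum_ones]
  have hcrossing : ∀ e ∈ E', ∃ a b, e = s(a, b) ∧ a ∈ H ∧ b ∉ H := by
    intro e he
    obtain ⟨a, b, rfl, ha, -⟩ := hi e he
    refine ⟨a, b, rfl, hH' ha, fun hb => hiii _ he fun v hv => ?_⟩
    rcases Sym2.mem_iff.mp hv with rfl | rfl
    exacts [hH' ha, hb]
  have hcut := card_filter_mem_pathSym2Edges_le_cutCount H hcrossing (d :: (l ++ [d']))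
  have hmeet : ∀ e ∈ E', ∃ v ∈ H', v ∈ e := fun e he => by
    obtain ⟨a, b, rfl, ha, -⟩ := hi e he
    exact ⟨a, ha, Sym2.mem_mk_left a b⟩
  have hmatching : (E'.filter (· ∈ pathSym2Edges (d :: (l ++ [d'])))).card ≤ H'.card :=
    (Finset.card_filter_le _ _).trans (Sym2.card_le_of_pairwise_disjoint hmeet hiv)
  obtain ⟨q, hq⟩ := hH'odd
  omega

/-- the 2-matching inequality
`in(H) + |{e ∈ E' : e is an edge of P}| ≤ ∑_{j ∈ H} y_j + (|H'| − 1)/2`. -/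
theorem pdstsp_two_matching
    {α : Type*} [DecidableEq α]
    (Vc : Finset α) (d d' : α)
    (hdd' : d ≠ d') (hdVc : d ∉ Vc) (hd'Vc : d' ∉ Vc)
    (Vt Sstar : Finset α)
    (hVtVc : Vt ⊆ Vc) (hSstarVc : Sstar ⊆ Vc) (hVtSstar : Vt ⊆ Sstar)
    -- the truck path `P` is `d :: l ++ [d']`, a simple path from `d` to `d'`
    (l : List α)
    (hnodup : (d :: (l ++ [d'])).Nodup)
    (hinternal : l.toFinset = Sstar)
    (y : α → ℕ) (hy : ∀ i, y i = if i ∈ Sstar then 1 else 0)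
    (H H' : Finset α) (hH : H ⊆ Vc) (hH' : H' ⊆ H)
    (hH'card : 3 ≤ H'.card) (hH'odd : Odd H'.card)
    -- `E'` is a set of (two-element) edges of the complete graph on `V`
    (E' : Finset (Sym2 α))
    (hE'edges : ∀ e ∈ E', ¬ e.IsDiag ∧ ∀ v ∈ e, v ∈ insert d (insert d' Vc))
    -- (i) every edge in `E'` has exactly one endpoint in `H'`
    (hi : ∀ e ∈ E', ∃ a b, e = s(a, b) ∧ a ∈ H' ∧ b ∉ H')
    -- (ii) every vertex of `H'` is an endpoint of exactly one edge of `E'`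
    (hii : ∀ v ∈ H', ∃! e, e ∈ E' ∧ v ∈ e)
    -- (iii) no edge in `E'` has both endpoints in `H`
    (hiii : ∀ e ∈ E', ¬ (∀ v ∈ e, v ∈ H))
    -- (iv) no two distinct edges in `E'` share an endpoint
    (hiv : ∀ e₁ ∈ E', ∀ e₂ ∈ E', e₁ ≠ e₂ → ∀ v ∈ e₁, v ∉ e₂) :
    inCount H (d :: (l ++ [d']))
        + (E'.filter (fun e => e ∈ pathSym2Edges (d :: (l ++ [d'])))).card
      ≤ (∑ j ∈ H, y j) + (H'.card - 1) / 2 :=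
  pdstsp_two_matching_general Vc d d' hdVc hd'Vc Sstar l hnodup hinternal y hy H H' hH hH' hH'odd E'
    hi hiii hiv
end

section
/- In the LP relaxation setting, assume in addition that 0 ≤ x_e ≤ 1 for every e ∈ E. Let H ⊆ V_c, let H' ⊆ H, and let E' ⊆ E be a set of edges such that: (i) every edge in E' has exactly one endpoint in H', (ii) every vertex of H' is an endpoint of exactly one edge of E', (iii) no edge in E' has both endpoints in H, and (iv) no two distinct edges in E' share an endpoint. Then the fractional 2-matching inequality in(H) + ∑_{e ∈ E'} x_e ≤ ∑_{j ∈ H} y_j + |H'|/2 holds. -/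
open scoped Classical

/-- The set of all two-element edges of the complete graph on the vertex set `V`. -/
noncomputable def edgeSet {α : Type*} [DecidableEq α] (V : Finset α) : Finset (Sym2 α) :=
  V.sym2.filter (fun e => ¬ e.IsDiag)

/-- `in(S)`: the sum of `x_e` over the edges `e` with both endpoints in `S`. -/
noncomputable def inSum {α : Type*} [DecidableEq α] (V : Finset α) (x : Sym2 α → ℝ)
    (S : Finset α) : ℝ :=
  ∑ e ∈ (edgeSet V).filter (fun e => ∀ v ∈ e, v ∈ S), x e

/-- `cut(S)`: the sum of `x_e` over the edges `e` with exactly one endpoint in `S`. -/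
noncomputable def cutSum {α : Type*} [DecidableEq α] (V : Finset α) (x : Sym2 α → ℝ)
    (S : Finset α) : ℝ :=
  ∑ e ∈ (edgeSet V).filter (fun e => (∃ v ∈ e, v ∈ S) ∧ ¬ (∀ v ∈ e, v ∈ S)), x e

theorem double_count {α : Type*} [DecidableEq α] (V : Finset α) (x : Sym2 α → ℝ)
    (H : Finset α) :
    ∑ j ∈ H, ∑ e ∈ (edgeSet V).filter (fun e => j ∈ e), x e
      = 2 * inSum V x H + cutSum V x H := by
  have lhs : ∑ j ∈ H, ∑ e ∈ (edgeSet V).filter (fun e => j ∈ e), x e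
      = ∑ e ∈ edgeSet V, ((H.filter (fun j => j ∈ e)).card : ℝ) * x e := by
    simp_rw [Finset.sum_filter]
    rw [Finset.sum_comm]
    refine Finset.sum_congr rfl fun e _ => ?_
    rw [← Finset.sum_filter, Finset.sum_const, nsmul_eq_mul]
  rw [lhs, inSum, cutSum, Finset.sum_filter, Finset.sum_filter, Finset.mul_sum,
    ← Finset.sum_add_distrib]
  refine Finset.sum_congr rfl fun e he => ?_
  rw [edgeSet, Finset.mem_filter] at he
  induction e using Sym2.ind with
  | _ a b =>
    have hab : a ≠ b := by simpa [Sym2.mk_isDiag_iff] using he.2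
    by_cases ha : a ∈ H <;> by_cases hb : b ∈ H
    · have : H.filter (fun j => j ∈ s(a, b)) = {a, b} := by
        ext j; simp only [Finset.mem_filter, Sym2.mem_iff, Finset.mem_insert,
          Finset.mem_singleton]
        constructor
        · rintro ⟨_, h⟩; exact h
        · rintro (rfl | rfl) <;> simp [ha, hb]
      rw [this, Finset.card_insert_of_notMem (by simp [hab]), Finset.card_singleton]
      simp [ha, hb]
    · have : H.filter (fun j => j ∈ s(a, b)) = {a} := by
        ext j; simp only [Finset.mem_filter, Sym2.mem_iff, Finset.mem_singleton]
        constructor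
        · rintro ⟨hj, rfl | rfl⟩; rfl; exact absurd hj hb
        · rintro rfl; simp [ha]
      rw [this, Finset.card_singleton]
      have h1 : ¬ ∀ v ∈ s(a, b), v ∈ H := by
        intro h; exact hb (h b (by simp))
      simp [ha, hb]
    · have : H.filter (fun j => j ∈ s(a, b)) = {b} := by
        ext j; simp only [Finset.mem_filter, Sym2.mem_iff, Finset.mem_singleton]
        constructor
        · rintro ⟨hj, rfl | rfl⟩; exact absurd hj ha; rfl
        · rintro rfl; simp [hb]
      rw [this, Finset.card_singleton]
      have h1 : ¬ ∀ v ∈ s(a, b), v ∈ H := by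
        intro h; exact ha (h a (by simp))
      simp [ha, hb]
    · have : H.filter (fun j => j ∈ s(a, b)) = ∅ := by
        ext j; simp only [Finset.mem_filter, Sym2.mem_iff, Finset.notMem_empty, iff_false]
        rintro ⟨hj, rfl | rfl⟩ <;> [exact ha hj; exact hb hj]
      rw [this, Finset.card_empty]
      simp [ha, hb]

/-- the fractional 2-matching inequality
`in(H) + ∑_{e ∈ E'} x_e ≤ ∑_{j ∈ H} y_j + |H'|/2`. -/
theorem lp_two_matching
    {α : Type*} [DecidableEq α]
    (Vc : Finset α) (d d' : α)
    (hdd' : d ≠ d') (hdVc : d ∉ Vc) (hd'Vc : d' ∉ Vc)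
    (x : Sym2 α → ℝ) (y : α → ℝ)
    -- the degree equations
    (hdeg : ∀ j ∈ Vc,
      ∑ e ∈ (edgeSet (insert d (insert d' Vc))).filter (fun e => j ∈ e), x e = 2 * y j)
    -- `0 ≤ x_e ≤ 1` for every edge `e`
    (hx : ∀ e ∈ edgeSet (insert d (insert d' Vc)), 0 ≤ x e ∧ x e ≤ 1)
    (H H' : Finset α) (hH : H ⊆ Vc) (hH' : H' ⊆ H)
    (E' : Finset (Sym2 α)) (hE' : E' ⊆ edgeSet (insert d (insert d' Vc)))
    -- (i) every edge in `E'` has exactly one endpoint in `H'`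
    (hi : ∀ e ∈ E', ∃ a b, e = s(a, b) ∧ a ∈ H' ∧ b ∉ H')
    -- (ii) every vertex of `H'` is an endpoint of exactly one edge of `E'`
    (hii : ∀ v ∈ H', ∃! e, e ∈ E' ∧ v ∈ e)
    -- (iii) no edge in `E'` has both endpoints in `H`
    (hiii : ∀ e ∈ E', ¬ (∀ v ∈ e, v ∈ H))
    -- (iv) no two distinct edges in `E'` share an endpoint
    (hiv : ∀ e₁ ∈ E', ∀ e₂ ∈ E', e₁ ≠ e₂ → ∀ v ∈ e₁, v ∉ e₂) :
    inSum (insert d (insert d' Vc)) x H + ∑ e ∈ E', x e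
      ≤ (∑ j ∈ H, y j) + (H'.card : ℝ) / 2 := by
  classical
  set V := insert d (insert d' Vc) with hV
  have hsum : 2 * inSum V x H + cutSum V x H = 2 * ∑ j ∈ H, y j := by
    rw [← double_count V x H, Finset.mul_sum]
    exact Finset.sum_congr rfl fun j hj => hdeg j (hH hj)
  have hsub : E' ⊆ (edgeSet V).filter (fun e => (∃ v ∈ e, v ∈ H) ∧ ¬ (∀ v ∈ e, v ∈ H)) := by
    intro e heE
    obtain ⟨a, b, rfl, haH', hbH'⟩ := hi e heE
    exact Finset.mem_filter.mpr ⟨hE' heE, ⟨a, by simp, hH' haH'⟩, hiii _ heE⟩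
  have hcut : ∑ e ∈ E', x e ≤ cutSum V x H := by
    apply Finset.sum_le_sum_of_subset_of_nonneg hsub
    intro e he _
    exact (hx e (Finset.mem_filter.mp he).1).1
  have hcard : E'.card ≤ H'.card := by
    apply Finset.card_le_card_of_surjOn
      (fun v => if h : ∃ e, e ∈ E' ∧ v ∈ e then h.choose else s(v, v))
    intro e heE
    obtain ⟨a, b, rfl, haH', hbH'⟩ := hi e heE
    have hex : ∃ e, e ∈ E' ∧ a ∈ e := ⟨s(a, b), heE, by simp⟩
    refine ⟨a, haH', ?_⟩
    simp only [dif_pos hex]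
    exact (hii a haH').unique hex.choose_spec ⟨heE, by simp⟩
  have hS1 : ∑ e ∈ E', x e ≤ (E'.card : ℝ) := by
    calc ∑ e ∈ E', x e ≤ ∑ e ∈ E', (1 : ℝ) :=
          Finset.sum_le_sum (fun e he => (hx e (hE' he)).2)
      _ = E'.card := by simp
  have hS : ∑ e ∈ E', x e ≤ (H'.card : ℝ) :=
    hS1.trans (by exact_mod_cast hcard)
  linarith
end
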